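/- arXiv:1604.02517 — 6 statements merged into one kernel-verified Lean document; each statement's English description precedes it below -/
import Mathlib

section
/- Let R_s : Fin N → ℝ≥0 be non-increasing and R_r : Fin N → ℝ≥0 be non-decreasing. If the total causality constraint holds, i.e., ∑_{i<N} R_r i ≤ ∑_{i<N} R_s i, then for every n ≤ N, the partial causality constraint ∑_{i<n} R_r i ≤ ∑_{i<n} R_s i also holds. -/
open scoped NNReal

open Finset

/-- If `g` overtakes `f` somewhere in a lower set `s`, monotonicity keeps it ahead on all of `sᶜ`,
so the total of `g` would exceed the total of `f`. -/
theorem Finset.sum_le_sum_of_isLowerSet_of_antitone_of_monotone {ι M : Type*} [Fintype ι]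
    [LinearOrder ι] [AddCommMonoid M] [LinearOrder M] [IsOrderedCancelAddMonoid M]
    {f g : ι → M} (hf : Antitone f) (hg : Monotone g) (htot : ∑ i, g i ≤ ∑ i, f i)
    {s : Finset ι} (hs : IsLowerSet (s : Set ι)) :
    ∑ i ∈ s, g i ≤ ∑ i ∈ s, f i := by
  by_contra! hlt
  obtain ⟨i, hi, hfg⟩ := exists_lt_of_sum_lt hlt
  have hcompl : ∑ j ∈ sᶜ, f j ≤ ∑ j ∈ sᶜ, g j := by
    refine sum_le_sum fun j hj => ?_
    have hij : i ≤ j := le_of_not_ge fun hji => mem_compl.mp hj (hs hji hi)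
    exact (hf hij).trans (hfg.le.trans (hg hij))
  have htot_lt := add_lt_add_of_lt_of_le hlt hcompl
  rw [sum_add_sum_compl, sum_add_sum_compl] at htot_lt
  exact htot.not_gt htot_lt

/-- Lemma 4 abstraction: with `R_s` non-increasing and `R_r` non-decreasing, the total
causality constraint implies all partial causality constraints. -/
theorem stmt_5 (N : ℕ) (Rs Rr : Fin N → ℝ≥0) (hs : Antitone Rs) (hr : Monotone Rr)
    (htot : ∑ i, Rr i ≤ ∑ i, Rs i) :
    ∀ n : ℕ, n ≤ N →
      ∑ i ∈ Finset.univ.filter (fun i : Fin N => (i : ℕ) < n), Rr i ≤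
        ∑ i ∈ Finset.univ.filter (fun i : Fin N => (i : ℕ) < n), Rs i := by
  intro n _
  refine sum_le_sum_of_isLowerSet_of_antitone_of_monotone hs hr htot fun i j hji hj => ?_
  simp only [coe_filter, mem_univ, true_and, Set.mem_ofPred_eq] at hj ⊢
  exact lt_of_le_of_lt hji hj
end

section
/- The water-filling rate function is monotone: for fixed positive channel gains γ : Fin N → ℝ>0, the map E ↦ ∑_n [log₂(η(E) · γ n)]⁺ — where η(E) is chosen so that ∑_n [η(E) - 1/γ n]⁺ = E — is strictly increasing in E > 0. -/
/-!
The filled power `η ↦ ∑ n, max (η - 1 / γ n) 0` is monotone, so a larger power budget forces a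
strictly higher water level, and each rate term `max (log₂ (η γ n)) 0` is monotone in `η`.
Since `E₁ > 0`, some channel is active at level `η₁`, i.e. `η₁ γ n₀ > 1`; there the rate term is
positive, hence strictly increases with the level.
-/

open Finset Real

section WaterLevel

variable {ι : Type*} (s : Finset ι) (a : ι → ℝ)

theorem monotone_sum_max_sub_zero : Monotone fun η : ℝ => ∑ i ∈ s, max (η - a i) 0 :=
  fun _ _ h => sum_le_sum fun _ _ => max_le_max_right 0 (sub_le_sub_right h _)

variable {s a}

theorem exists_lt_of_sum_max_sub_zero_pos {η : ℝ} (h : 0 < ∑ i ∈ s, max (η - a i) 0) :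
    ∃ i ∈ s, a i < η := by
  obtain ⟨i, hi, hpos⟩ := exists_lt_of_sum_lt (f := fun _ => (0 : ℝ)) (by simpa using h)
  exact ⟨i, hi, sub_pos.1 ((lt_max_iff.1 hpos).resolve_right (lt_irrefl 0))⟩

end WaterLevel

section PositiveLogb

variable {b x y : ℝ}

theorem max_logb_zero_le_max_logb_zero (hb : 1 < b) (hx : 0 < x) (hxy : x ≤ y) :
    max (logb b x) 0 ≤ max (logb b y) 0 :=
  max_le_max_right 0 (logb_le_logb_of_le hb hx hxy)

theorem max_logb_zero_lt_max_logb_zero (hb : 1 < b) (hx : 1 < x) (hxy : x < y) :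
    max (logb b x) 0 < max (logb b y) 0 := by
  rw [max_eq_left (logb_pos hb hx).le]
  exact (logb_lt_logb hb (zero_lt_one.trans hx) hxy).trans_le (le_max_left _ _)

end PositiveLogb

theorem stmt_7_general (N : ℕ) (γ : Fin N → ℝ) (hγ : ∀ n, 0 < γ n)
    (E₁ E₂ η₁ η₂ : ℝ) (hE₁ : 0 < E₁) (hE : E₁ < E₂)
    (hη₁ : ∑ n, max (η₁ - 1 / γ n) 0 = E₁)
    (hη₂ : ∑ n, max (η₂ - 1 / γ n) 0 = E₂) :
    ∑ n, max (Real.logb 2 (η₁ * γ n)) 0 < ∑ n, max (Real.logb 2 (η₂ * γ n)) 0 := by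
  obtain ⟨n₀, -, hactive⟩ := exists_lt_of_sum_max_sub_zero_pos (hη₁ ▸ hE₁)
  have hη : η₁ < η₂ :=
    (monotone_sum_max_sub_zero _ _).reflect_lt (hη₁.trans_lt (hE.trans_eq hη₂.symm))
  have hη₁_pos : 0 < η₁ := (one_div_pos.2 (hγ n₀)).trans hactive
  refine sum_lt_sum (fun n _ => ?_) ⟨n₀, mem_univ n₀, ?_⟩
  · exact max_logb_zero_le_max_logb_zero one_lt_two (mul_pos hη₁_pos (hγ n))
      (mul_le_mul_of_nonneg_right hη.le (hγ n).le)
  · exact max_logb_zero_lt_max_logb_zero one_lt_two ((div_lt_iff₀ (hγ n₀)).1 hactive)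
      (mul_lt_mul_of_pos_right hη (hγ n₀))

/-- The classic water-filling rate is strictly increasing in the total power `E`. -/
theorem stmt_7 (N : ℕ) (hN : 0 < N) (γ : Fin N → ℝ) (hγ : ∀ n, 0 < γ n)
    (E₁ E₂ η₁ η₂ : ℝ) (hE₁ : 0 < E₁) (hE : E₁ < E₂)
    (hη₁ : ∑ n, max (η₁ - 1 / γ n) 0 = E₁)
    (hη₂ : ∑ n, max (η₂ - 1 / γ n) 0 = E₂) :
    ∑ n, max (Real.logb 2 (η₁ * γ n)) 0 < ∑ n, max (Real.logb 2 (η₂ * γ n)) 0 :=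
  stmt_7_general N γ hγ E₁ E₂ η₁ η₂ hE₁ hE hη₁ hη₂
end

section
/- For fixed positive channel gains γ : Fin N → ℝ>0 and total power E > 0, there exists a unique water level η > 0 such that ∑_n max(η - 1/γ n, 0) = E. -/
/-!
The total water `W(η) = ∑ max (η - c i) 0` above the floor levels `c i = 1 / γ i` is
continuous, vanishes at the lowest floor and is at least `η - c i`, so the intermediate value
theorem gives a level with `W(η) = E`. When `W(η) > 0` some floor lies below `η` (hence `η > 0`)
and its term grows strictly with `η`, so `W` is strictly increasing there and the level is unique.
-/

open Finset

section

variable {ι : Type*} [Fintype ι]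

def waterFill (c : ι → ℝ) (η : ℝ) : ℝ := ∑ i, max (η - c i) 0

variable (c : ι → ℝ)

theorem continuous_waterFill : Continuous (waterFill c) :=
  continuous_finsetSum _ fun _ _ => (continuous_id.sub continuous_const).max continuous_const

theorem waterFill_eq_zero_of_le {η : ℝ} (h : ∀ i, η ≤ c i) : waterFill c η = 0 :=
  sum_eq_zero fun i _ => max_eq_right (by linarith [h i])

theorem sub_le_waterFill (η : ℝ) (i : ι) : η - c i ≤ waterFill c η :=
  (le_max_left _ _).trans <|
    single_le_sum (f := fun j => max (η - c j) 0) (fun _ _ => le_max_right _ _) (mem_univ i)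

theorem exists_lt_of_waterFill_pos {η : ℝ} (h : 0 < waterFill c η) : ∃ i, c i < η := by
  by_contra! hle
  exact h.ne' (waterFill_eq_zero_of_le c hle)

theorem waterFill_lt_waterFill {x y : ℝ} (hx : 0 < waterFill c x) (hxy : x < y) :
    waterFill c x < waterFill c y := by
  obtain ⟨i, hi⟩ := exists_lt_of_waterFill_pos c hx
  refine sum_lt_sum (fun j _ => max_le_max (by linarith) le_rfl) ⟨i, mem_univ i, ?_⟩
  rw [max_eq_left (by linarith), max_eq_left (by linarith)]
  linarith

theorem injOn_waterFill : Set.InjOn (waterFill c) {η | 0 < waterFill c η} := by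
  intro x hx y hy hxy
  by_contra hne
  rcases lt_or_gt_of_ne hne with hlt | hlt
  · exact (waterFill_lt_waterFill c hx hlt).ne hxy
  · exact (waterFill_lt_waterFill c hy hlt).ne' hxy

theorem exists_waterFill_eq [Nonempty ι] {E : ℝ} (hE : 0 ≤ E) : ∃ η, waterFill c η = E := by
  obtain ⟨i₀, hi₀⟩ := Finite.exists_min c
  have hlow : waterFill c (c i₀) = 0 := waterFill_eq_zero_of_le c hi₀
  have hhigh : E ≤ waterFill c (c i₀ + E) := by
    simpa using sub_le_waterFill c (c i₀ + E) i₀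
  obtain ⟨η, -, hη⟩ := intermediate_value_Icc (by linarith : c i₀ ≤ c i₀ + E)
    (continuous_waterFill c).continuousOn ⟨hlow ▸ hE, hhigh⟩
  exact ⟨η, hη⟩

end

/-- Water-filling feasibility and uniqueness: there is a unique water level `η > 0` with
`∑ n max(η - 1/γ n, 0) = E`. -/
theorem stmt_8 (N : ℕ) (hN : 0 < N) (γ : Fin N → ℝ) (hγ : ∀ n, 0 < γ n)
    (E : ℝ) (hE : 0 < E) :
    ∃! η : ℝ, 0 < η ∧ ∑ n, max (η - 1 / γ n) 0 = E := by
  have : Nonempty (Fin N) := ⟨⟨0, hN⟩⟩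
  let c : Fin N → ℝ := fun n => 1 / γ n
  have hpos : ∀ {x}, waterFill c x = E → 0 < waterFill c x := fun h => h ▸ hE
  obtain ⟨η, hη⟩ := exists_waterFill_eq c hE.le
  refine ⟨η, ⟨?_, hη⟩, fun y hy => injOn_waterFill c (hpos hy.2) (hpos hη) (hy.2.trans hη.symm)⟩
  obtain ⟨i, hi⟩ := exists_lt_of_waterFill_pos c (hpos hη)
  exact (one_div_pos.mpr (hγ i)).trans hi
end

section
/- The optimal value of the weighted sum-rate maximization max ∑_n β n · log₂(1 + p n · γ n) subject to ∑_n p n ≤ E, p n ≥ 0, with weights β n ≥ 0 and gains γ n > 0, is attained at p n = max(η β n - 1/γ n, 0) for a suitable η ≥ 0 satisfying ∑_n max(η β n - 1/γ n, 0) = E, whenever some β n > 0. -/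
/-!
The objective is concave, so it suffices to check the KKT conditions at the water-filling
allocation `p` with multiplier `1 / η`: the marginal gain `β n γ n / (1 + p n γ n)` of slot `n`
equals `1 / η` where `p n > 0` and is at most `1 / η` where `p n = 0`. Concretely, the tangent
bound `log y - log x ≤ (y - x) / x` gives, slot by slot,
`η β n log (1 + q n γ n) ≤ η β n log (1 + p n γ n) + (q n - p n)`, and summing uses
`∑ q ≤ E = ∑ p`. The water level `η` itself comes from the intermediate value theorem.
-/

open Finset Real

lemma log_sub_log_le_sub_div {x y : ℝ} (hx : 0 < x) (hy : 0 < y) :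
    log y - log x ≤ (y - x) / x := by
  have h := log_le_sub_one_of_pos (div_pos hy hx)
  rwa [log_div hy.ne' hx.ne', div_sub_one hx.ne'] at h

lemma exists_pos_sum_max_mul_sub_eq {ι : Type*} [Fintype ι] {β c : ι → ℝ}
    (hβpos : ∃ i, 0 < β i) (hc : ∀ i, 0 ≤ c i) {E : ℝ} (hE : 0 < E) :
    ∃ η, 0 < η ∧ ∑ i, max (η * β i - c i) 0 = E := by
  obtain ⟨i₀, hi₀⟩ := hβpos
  set f : ℝ → ℝ := fun η => ∑ i, max (η * β i - c i) 0
  have hf0 : f 0 = 0 := sum_eq_zero fun i _ => by simp [hc i]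
  have hfM : E ≤ f ((E + c i₀) / β i₀) :=
    calc E = max ((E + c i₀) / β i₀ * β i₀ - c i₀) 0 := by
          rw [div_mul_cancel₀ _ hi₀.ne', add_sub_cancel_right, max_eq_left hE.le]
      _ ≤ f ((E + c i₀) / β i₀) :=
          single_le_sum (f := fun i => max ((E + c i₀) / β i₀ * β i - c i) 0)
            (fun i _ => le_max_right _ _) (mem_univ i₀)
  have hcont : Continuous f := by fun_prop
  obtain ⟨η, ⟨hη0, -⟩, hη⟩ := intermediate_value_Icc (by have := hc i₀; positivity)
    hcont.continuousOn ⟨hf0 ▸ hE.le, hfM⟩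
  refine ⟨η, lt_of_le_of_ne hη0 ?_, hη⟩
  rintro rfl
  exact hE.ne' (hη.symm.trans hf0)

lemma mul_log_one_add_le_of_water_level {η b g q : ℝ} (hη : 0 ≤ η) (hb : 0 ≤ b) (hg : 0 < g)
    (hq : 0 ≤ q) :
    η * (b * log (1 + q * g)) ≤
      η * (b * log (1 + max (η * b - 1 / g) 0 * g)) + (q - max (η * b - 1 / g) 0) := by
  set p := max (η * b - 1 / g) 0
  have hx : 0 < 1 + p * g := by have : 0 ≤ p := le_max_right _ _; positivity
  have hy : 0 < 1 + q * g := by positivity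
  have tangent : log (1 + q * g) - log (1 + p * g) ≤ (q - p) * g / (1 + p * g) := by
    simpa only [add_sub_add_left_eq_sub, sub_mul] using log_sub_log_le_sub_div hx hy
  have slackness : η * b * ((q - p) * g / (1 + p * g)) ≤ q - p := by
    rcases le_total (η * b - 1 / g) 0 with h | h
    · have hp : p = 0 := max_eq_right h
      have hηbg : η * b * g ≤ 1 := by
        rwa [sub_nonpos, le_div_iff₀ hg] at h
      rw [hp]
      simpa [mul_comm_div, mul_assoc, mul_comm q] using mul_le_of_le_one_left hq hηbg
    · have hp : p = η * b - 1 / g := max_eq_left h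
      have hxη : 1 + p * g = η * b * g := by rw [hp]; field_simp; ring
      have hηb : η * b ≠ 0 := left_ne_zero_of_mul (hxη ▸ hx.ne')
      rw [hxη, mul_div_mul_right _ _ hg.ne', mul_div_cancel₀ _ hηb]
  calc η * (b * log (1 + q * g))
      = η * b * (log (1 + q * g) - log (1 + p * g)) + η * (b * log (1 + p * g)) := by ring
    _ ≤ η * b * ((q - p) * g / (1 + p * g)) + η * (b * log (1 + p * g)) := by gcongr
    _ ≤ η * (b * log (1 + p * g)) + (q - p) := by linarith

lemma sum_mul_log_one_add_le_of_water_level {ι : Type*} [Fintype ι] {β γ q : ι → ℝ} {η E : ℝ}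
    (hη : 0 < η) (hβ : ∀ i, 0 ≤ β i) (hγ : ∀ i, 0 < γ i) (hq : ∀ i, 0 ≤ q i)
    (hqE : ∑ i, q i ≤ E) (hpE : ∑ i, max (η * β i - 1 / γ i) 0 = E) :
    ∑ i, β i * log (1 + q i * γ i) ≤
      ∑ i, β i * log (1 + max (η * β i - 1 / γ i) 0 * γ i) := by
  refine le_of_mul_le_mul_left ?_ hη
  calc η * ∑ i, β i * log (1 + q i * γ i)
      = ∑ i, η * (β i * log (1 + q i * γ i)) := mul_sum _ _ _
    _ ≤ ∑ i, (η * (β i * log (1 + max (η * β i - 1 / γ i) 0 * γ i))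
          + (q i - max (η * β i - 1 / γ i) 0)) :=
        sum_le_sum fun i _ => mul_log_one_add_le_of_water_level hη.le (hβ i) (hγ i) (hq i)
    _ = η * ∑ i, β i * log (1 + max (η * β i - 1 / γ i) 0 * γ i) + (∑ i, q i - E) := by
        rw [sum_add_distrib, sum_sub_distrib, mul_sum, hpE]
    _ ≤ η * ∑ i, β i * log (1 + max (η * β i - 1 / γ i) 0 * γ i) := by linarith

/-- Weighted water-filling is optimal for the weighted sum-rate maximization problem. -/
theorem stmt_9 (N : ℕ) (β γ : Fin N → ℝ) (hβ : ∀ n, 0 ≤ β n) (hβpos : ∃ n, 0 < β n)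
    (hγ : ∀ n, 0 < γ n) (E : ℝ) (hE : 0 < E) :
    ∃ η : ℝ, 0 ≤ η ∧ ∑ n, max (η * β n - 1 / γ n) 0 = E ∧
      ∀ q : Fin N → ℝ, (∀ n, 0 ≤ q n) → ∑ n, q n ≤ E →
        ∑ n, β n * Real.logb 2 (1 + q n * γ n) ≤
          ∑ n, β n * Real.logb 2 (1 + max (η * β n - 1 / γ n) 0 * γ n) := by
  obtain ⟨η, hη, hpE⟩ :=
    exists_pos_sum_max_mul_sub_eq hβpos (fun n => (one_div_pos.2 (hγ n)).le) hE
  refine ⟨η, hη.le, hpE, fun q hq hqE => ?_⟩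
  simp only [logb, mul_div_assoc', ← sum_div]
  exact div_le_div_of_nonneg_right
    (sum_mul_log_one_add_le_of_water_level hη hβ hγ hq hqE hpE) (log_pos one_lt_two).le
end

section
/- Reordering optimality (Theorem 2 core): let g : Fin N → ℝ be any sequence of relay x-positions with values in [0, D] and with |g(n+1) - g(n)| ≤ V for all n; let g̃ be the non-decreasing rearrangement of g. Then g̃ also satisfies |g̃(n+1) - g̃(n)| ≤ V for all n. -/
/-!
If the sorted sequence jumped by more than `V` between two consecutive values `a < b`, no value
of `g` would lie strictly between `a` and `b`. A sequence moving by at most `V` per step cannot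
cross such a gap, so all values of `g` would lie on one side of it; but `a` and `b` are both
values of `g`.
-/

theorem Fin.iff_of_forall_succ_iff {N : ℕ} {P : Fin N → Prop}
    (hstep : ∀ i : ℕ, (h : i + 1 < N) → (P ⟨i + 1, h⟩ ↔ P ⟨i, Nat.lt_of_succ_lt h⟩))
    (j k : Fin N) : P j ↔ P k := by
  have hzero : ∀ (n : ℕ) (hn : n < N), P ⟨n, hn⟩ ↔ P ⟨0, by omega⟩ := by
    intro n
    induction n with
    | zero => exact fun _ => Iff.rfl
    | succ n ih => exact fun hn => (hstep n hn).trans (ih (by omega))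
  exact (hzero j j.isLt).trans (hzero k k.isLt).symm

theorem Monotone.le_or_succ_le {N : ℕ} {β : Type*} [Preorder β] {f : Fin N → β}
    (hf : Monotone f) (i : ℕ) (h : i + 1 < N) (j : Fin N) :
    f j ≤ f ⟨i, Nat.lt_of_succ_lt h⟩ ∨ f ⟨i + 1, h⟩ ≤ f j := by
  rcases le_or_gt j ⟨i, Nat.lt_of_succ_lt h⟩ with hj | hj
  · exact .inl (hf hj)
  · exact .inr (hf (Fin.mk_le_of_le_val (by simpa [Fin.lt_def] using hj)))

theorem le_iff_le_of_abs_sub_le_of_gap {x y a b V : ℝ} (hx : x ≤ a ∨ b ≤ x)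
    (hy : y ≤ a ∨ b ≤ y) (hxy : |y - x| ≤ V) (hV : V < b - a) : y ≤ a ↔ x ≤ a := by
  rw [abs_le] at hxy
  rcases hx with hx | hx <;> rcases hy with hy | hy <;> constructor <;> intro <;> linarith

theorem Fin.le_iff_le_of_abs_succ_sub_le_of_gap {N : ℕ} {f : Fin N → ℝ} {a b V : ℝ}
    (hspeed : ∀ i : ℕ, (h : i + 1 < N) → |f ⟨i + 1, h⟩ - f ⟨i, Nat.lt_of_succ_lt h⟩| ≤ V)
    (hgap : ∀ n, f n ≤ a ∨ b ≤ f n) (hV : V < b - a) (j k : Fin N) :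
    f j ≤ a ↔ f k ≤ a :=
  Fin.iff_of_forall_succ_iff (P := (f · ≤ a))
    (fun i h => le_iff_le_of_abs_sub_le_of_gap (hgap _) (hgap _) (hspeed i h) hV) j k

/-- Sorting a sequence in non-decreasing order preserves the per-step speed constraint. -/
theorem stmt_11 (N : ℕ) (V : ℝ) (g g' : Fin N → ℝ)
    (hspeed : ∀ i : ℕ, (h : i + 1 < N) → |g ⟨i + 1, h⟩ - g ⟨i, by omega⟩| ≤ V)
    (σ : Equiv.Perm (Fin N)) (hperm : g' = g ∘ σ) (hmono : Monotone g') :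
    ∀ i : ℕ, (h : i + 1 < N) → |g' ⟨i + 1, h⟩ - g' ⟨i, by omega⟩| ≤ V := by
  intro i h
  have hab : g' ⟨i, by omega⟩ ≤ g' ⟨i + 1, h⟩ := hmono (Fin.mk_le_mk.mpr i.le_succ)
  rw [abs_of_nonneg (sub_nonneg.mpr hab)]
  by_contra! hjump
  have hgap : ∀ n, g n ≤ g' ⟨i, by omega⟩ ∨ g' ⟨i + 1, h⟩ ≤ g n := fun n => by
    simpa [hperm] using hmono.le_or_succ_le i h (σ.symm n)
  have hside :=
    Fin.le_iff_le_of_abs_succ_sub_le_of_gap hspeed hgap hjump (σ ⟨i + 1, h⟩) (σ ⟨i, by omega⟩)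
  subst hperm
  simp only [Function.comp_apply, le_refl, iff_true] at hside hjump
  linarith [(abs_nonneg _).trans (hspeed i h)]
end

section
/- SCA lower bound for channel capacity: for d > 0, γ ≥ 0, x, y ∈ ℝ with d² = H² + x² + y² (H > 0), and any increments δ, ξ ∈ ℝ, log₂(1 + γ/(H² + (x+δ)² + (y+ξ)²)) ≥ log₂(1 + γ/d²) - a(δ² + ξ²) - bδ - cξ, where a = γ log₂e/(d²(γ+d²)), b = 2xa, c = 2ya. -/
/-!
The rate `log (1 + γ / s)` is a convex function of the squared distance `s > 0`, so it lies above
its tangent line at `s = d²`; this follows from `log u ≤ u - 1` applied to the ratio of the two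
arguments of the logarithm.  The horizontal displacement `(δ, ξ)` changes the squared distance by
`δ² + ξ² + 2xδ + 2yξ`, and substituting this into the tangent-line bound gives the claim.
-/

open Real

lemma log_one_add_div_sub_le {γ s t : ℝ} (hγ : 0 ≤ γ) (hs : 0 < s) (ht : 0 < t) :
    log (1 + γ / s) - γ / (s * (γ + s)) * (t - s) ≤ log (1 + γ / t) := by
  have hS : 0 < 1 + γ / s := by positivity
  have hT : 0 < 1 + γ / t := by positivity
  have hratio : (1 + γ / s) / (1 + γ / t) - 1 = γ * (t - s) / (s * (γ + t)) := by
    field_simp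
    ring
  suffices γ * (t - s) / (s * (γ + t)) ≤ γ / (s * (γ + s)) * (t - s) by
    have := log_le_sub_one_of_pos (div_pos hS hT)
    rw [log_div hS.ne' hT.ne', hratio] at this
    linarith
  rw [div_mul_eq_mul_div, div_le_div_iff₀ (by positivity) (by positivity)]
  nlinarith [mul_nonneg (mul_nonneg hγ (sq_nonneg (t - s))) hs.le]

lemma logb_one_add_div_sub_le {b γ s t : ℝ} (hb : 1 < b) (hγ : 0 ≤ γ) (hs : 0 < s) (ht : 0 < t) :
    logb b (1 + γ / s) - γ * logb b (exp 1) / (s * (γ + s)) * (t - s) ≤ logb b (1 + γ / t) :=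
  calc logb b (1 + γ / s) - γ * logb b (exp 1) / (s * (γ + s)) * (t - s)
      = (log (1 + γ / s) - γ / (s * (γ + s)) * (t - s)) / log b := by
        simp only [logb, log_exp]
        ring
    _ ≤ log (1 + γ / t) / log b := by
        gcongr
        · exact (log_pos hb).le
        · exact log_one_add_div_sub_le hγ hs ht

theorem stmt_15_general (H x y δ ξ γ d : ℝ) (hH : 0 < H) (hγ : 0 ≤ γ)
    (hd : d ^ 2 = H ^ 2 + x ^ 2 + y ^ 2) :
    Real.logb 2 (1 + γ / (H ^ 2 + (x + δ) ^ 2 + (y + ξ) ^ 2)) ≥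
      Real.logb 2 (1 + γ / d ^ 2)
        - (γ * Real.logb 2 (Real.exp 1) / (d ^ 2 * (γ + d ^ 2))) * (δ ^ 2 + ξ ^ 2)
        - (2 * x * (γ * Real.logb 2 (Real.exp 1) / (d ^ 2 * (γ + d ^ 2)))) * δ
        - (2 * y * (γ * Real.logb 2 (Real.exp 1) / (d ^ 2 * (γ + d ^ 2)))) * ξ := by
  have hd2 : 0 < d ^ 2 := by rw [hd]; positivity
  have hdist : 0 < H ^ 2 + (x + δ) ^ 2 + (y + ξ) ^ 2 := by positivity
  have hchange :
      H ^ 2 + (x + δ) ^ 2 + (y + ξ) ^ 2 - d ^ 2 = δ ^ 2 + ξ ^ 2 + 2 * x * δ + 2 * y * ξ := by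
    rw [hd]; ring
  have tangent := logb_one_add_div_sub_le one_lt_two hγ hd2 hdist
  rw [hchange] at tangent
  linear_combination tangent

/-- Lemma 2 (SCA lower bound): global concave-quadratic lower bound on the link rate after a
horizontal displacement `(δ, ξ)` of the relay. -/
theorem stmt_15 (H x y δ ξ γ d : ℝ) (hH : 0 < H) (hγ : 0 ≤ γ)
    (hd0 : 0 < d) (hd : d ^ 2 = H ^ 2 + x ^ 2 + y ^ 2) :
    Real.logb 2 (1 + γ / (H ^ 2 + (x + δ) ^ 2 + (y + ξ) ^ 2)) ≥
      Real.logb 2 (1 + γ / d ^ 2)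
        - (γ * Real.logb 2 (Real.exp 1) / (d ^ 2 * (γ + d ^ 2))) * (δ ^ 2 + ξ ^ 2)
        - (2 * x * (γ * Real.logb 2 (Real.exp 1) / (d ^ 2 * (γ + d ^ 2)))) * δ
        - (2 * y * (γ * Real.logb 2 (Real.exp 1) / (d ^ 2 * (γ + d ^ 2)))) * ξ :=
  stmt_15_general H x y δ ξ γ d hH hγ hd
end
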